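/- Let S be a sub-semifield of 𝕋 (with S ≠ 𝔹) and let A be a topological S-algebra. Equip the set Cont A with the topology generated by the sets U(f,g) = {Q ∈ Cont A : (f + g, g) ∈ Q and (g, 0) ∉ Q} for f, g ∈ A (these encode the conditions |f|_Q ≤ |g|_Q ≠ 0). Then for P, P' ∈ Cont A, the point P' lies in the topological closure of {P} (i.e., P' is a specialization of P) if and only if P' ⊆ P as subsets of A × A. -/

import Mathlib

/-- A totally ordered idempotent semifield, assumed different from the Boolean semifield `𝔹`. -/
class IdemTOSemifield (K : Type*) extends CommSemiring K, LinearOrder K where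
  add_eq_max : ∀ a b : K, a + b = max a b
  exists_inv : ∀ a : K, a ≠ 0 → ∃ b : K, a * b = 1
  exists_nontrivial_unit : ∃ a : K, a ≠ 0 ∧ a ≠ 1

/-- The canonical topology on a totally ordered semifield. -/
def canonicalTopology (K : Type*) [IdemTOSemifield K] : TopologicalSpace K :=
  TopologicalSpace.generateFrom
    {s : Set K | (∃ a : K, a ≠ 0 ∧ s = {a}) ∨ (∃ a : K, a ≠ 0 ∧ s = Set.Iic a)}

private theorem nnreal_mul_max (a b c : NNReal) : a * max b c = max (a * b) (a * c) := by
  rcases le_total b c with h | h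
  · rw [max_eq_right h, max_eq_right (mul_le_mul_right h a)]
  · rw [max_eq_left h, max_eq_left (mul_le_mul_right h a)]

private theorem nnreal_max_mul (a b c : NNReal) : max a b * c = max (a * c) (b * c) := by
  rcases le_total a b with h | h
  · rw [max_eq_right h, max_eq_right (mul_le_mul_left h c)]
  · rw [max_eq_left h, max_eq_left (mul_le_mul_left h c)]

/-- The tropical semifield `𝕋`, modelled as `[0, ∞)` with addition `max` and the usual
multiplication. -/
def Trop : Type := NNReal

namespace Trop

/-- Regard a nonnegative real as an element of `Trop`. -/
def mk (x : NNReal) : Trop := x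

/-- The underlying nonnegative real of an element of `Trop`. -/
def toNNReal (x : Trop) : NNReal := x

noncomputable instance instLinearOrder : LinearOrder Trop :=
  inferInstanceAs (LinearOrder NNReal)

noncomputable instance instAdd : Add Trop := ⟨fun a b => max a b⟩
instance instZero : Zero Trop := inferInstanceAs (Zero NNReal)
instance instMul : Mul Trop := inferInstanceAs (Mul NNReal)
instance instOne : One Trop := inferInstanceAs (One NNReal)

noncomputable instance instCommSemiring : CommSemiring Trop where
  __ := (inferInstanceAs (CommMonoidWithZero NNReal) : CommMonoidWithZero Trop)
  add a b := a + b
  nsmul := nsmulRec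
  add_assoc a b c := max_assoc a b c
  zero_add a := max_eq_right (zero_le : (0 : NNReal) ≤ toNNReal a)
  add_zero a := max_eq_left (zero_le : (0 : NNReal) ≤ toNNReal a)
  add_comm a b := max_comm a b
  left_distrib a b c := by exact nnreal_mul_max a b c
  right_distrib a b c := by exact nnreal_max_mul a b c

noncomputable instance instIdemTOSemifield : IdemTOSemifield Trop where
  add_eq_max a b := rfl
  exists_inv a ha :=
    ⟨mk (toNNReal a)⁻¹, by exact mul_inv_cancel₀ (a := toNNReal a) (fun h => ha h)⟩
  exists_nontrivial_unit :=
    ⟨mk 2, fun h => two_ne_zero (show (2 : NNReal) = 0 from h),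
      fun h => by
        have : (2 : NNReal) = 1 := h
        norm_num at this⟩

end Trop

/-- `S` is (isomorphic to) a sub-semifield of the tropical semifield `𝕋` (and `S ≠ 𝔹`). -/
class TropSub (S : Type*) extends IdemTOSemifield S where
  emb : S →+* Trop
  emb_injective : Function.Injective emb

universe u

/-- A witness that the prime congruence `P` belongs to `Cont A`: a continuous homomorphism to a
totally ordered semifield (with its canonical topology) whose congruence kernel is `P` and whose
image contains an element other than `0` and `1`. -/
structure ContWitness {A : Type u} [CommSemiring A] (τ : TopologicalSpace A) (P : RingCon A) :
    Type (u + 1) where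
  K : Type u
  [instK : IdemTOSemifield K]
  v : A →+* K
  cont : @Continuous A K τ (canonicalTopology K) v
  ker : ∀ f g : A, P f g ↔ v f = v g
  nontrivialImage : ∃ x : K, x ∈ Set.range ⇑v ∧ x ≠ 0 ∧ x ≠ 1

/-- `P ∈ Cont A` for a topological semiring `(A, τ)`. -/
def InCont {A : Type u} [CommSemiring A] (τ : TopologicalSpace A) (P : RingCon A) : Prop :=
  Nonempty (ContWitness τ P)

/-!
Statement 14: in the topology on `Cont A` generated by the sets
`U(f,g) = {Q : |f|_Q ≤ |g|_Q ≠ 0}`, a point `P'` is a specialization of `P` (i.e. lies in the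
closure of `{P}`) if and only if `P' ⊆ P`.
-/


section MyHelpers

variable {K : Type*} [IdemTOSemifield K]

private theorem myK_le_iff {a b : K} : a ≤ b ↔ a + b = b := by
  rw [IdemTOSemifield.add_eq_max, max_eq_right_iff]

private theorem myK_zero_le (a : K) : (0 : K) ≤ a := myK_le_iff.mpr (zero_add a)

private theorem myK_zero_ne_one : (0 : K) ≠ 1 := by
  obtain ⟨a, ha0, _⟩ := IdemTOSemifield.exists_nontrivial_unit (K := K)
  intro h
  exact ha0 (by rw [← mul_one a, ← h, mul_zero])

private theorem myK_mul_le (c : K) {a b : K} (h : a ≤ b) : c * a ≤ c * b :=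
  myK_le_iff.mpr (by rw [← mul_add, myK_le_iff.mp h])

private theorem myK_mul_ne_zero {a b : K} (ha : a ≠ 0) (hb : b ≠ 0) : a * b ≠ 0 := by
  obtain ⟨a', ha'⟩ := IdemTOSemifield.exists_inv a ha
  intro h
  apply hb
  calc b = a' * (a * b) := by rw [← mul_assoc, mul_comm a' a, ha', one_mul]
    _ = 0 := by rw [h, mul_zero]

private theorem myK_exists_lt_one : ∃ u : K, u ≠ 0 ∧ u < 1 := by
  obtain ⟨a, ha0, ha1⟩ := IdemTOSemifield.exists_nontrivial_unit (K := K)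
  rcases lt_or_gt_of_ne ha1 with h | h
  · exact ⟨a, ha0, h⟩
  · obtain ⟨b, hb⟩ := IdemTOSemifield.exists_inv a ha0
    have hb0 : b ≠ 0 := by
      intro hb0; rw [hb0, mul_zero] at hb; exact myK_zero_ne_one hb
    refine ⟨b, hb0, ?_⟩
    by_contra hle
    push_neg at hle
    have : a * 1 ≤ a * b := myK_mul_le a hle
    rw [mul_one, hb] at this
    exact absurd h (not_lt.mpr this)

private theorem myK_mul_lt {c u : K} (hc : c ≠ 0) (hu : u < 1) : c * u < c := by
  have hle : c * u ≤ c := by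
    have := myK_mul_le c hu.le; rwa [mul_one] at this
  refine lt_of_le_of_ne hle (fun heq => ?_)
  obtain ⟨d, hd⟩ := IdemTOSemifield.exists_inv c hc
  have : u = 1 := by
    calc u = d * (c * u) := by rw [← mul_assoc, mul_comm d c, hd, one_mul]
      _ = d * c := by rw [heq]
      _ = 1 := by rw [mul_comm, hd]
  exact hu.ne this

/-- Any open set of the canonical topology containing `0` contains an interval `[0, ε]`. -/
private theorem myK_open_zero_mem {V : Set K}
    (hV : TopologicalSpace.GenerateOpen
      {s : Set K | (∃ a : K, a ≠ 0 ∧ s = {a}) ∨ (∃ a : K, a ≠ 0 ∧ s = Set.Iic a)} V) :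
    (0 : K) ∈ V → ∃ ε : K, ε ≠ 0 ∧ Set.Iic ε ⊆ V := by
  induction hV with
  | basic s hs =>
    intro h0
    rcases hs with ⟨a, ha, rfl⟩ | ⟨a, ha, rfl⟩
    · exact absurd (Set.mem_singleton_iff.mp h0).symm ha
    · exact ⟨a, ha, subset_rfl⟩
  | univ =>
    intro _
    exact ⟨1, fun h => myK_zero_ne_one (K := K) h.symm, fun _ _ => trivial⟩
  | inter s t _ _ ihs iht =>
    intro h0
    obtain ⟨ε₁, hε₁, hs₁⟩ := ihs h0.1
    obtain ⟨ε₂, hε₂, hs₂⟩ := iht h0.2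
    refine ⟨min ε₁ ε₂, ?_, fun x hx => ⟨hs₁ (hx.trans (min_le_left _ _)), hs₂ (hx.trans (min_le_right _ _))⟩⟩
    rcases min_cases ε₁ ε₂ with ⟨h, _⟩ | ⟨h, _⟩ <;> rw [h] <;> assumption
  | sUnion 𝒮 _ ih =>
    intro h0
    obtain ⟨t, ht, h0t⟩ := h0
    obtain ⟨ε, hε, hsub⟩ := ih t ht h0t
    exact ⟨ε, hε, fun x hx => ⟨t, ht, hsub hx⟩⟩

end MyHelpers

theorem specialization_in_cont_iff_subset {S A : Type u} [TropSub S] [CommSemiring A]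
    (tA : TopologicalSpace A) (hadd : @ContinuousAdd A tA _) (hmul : @ContinuousMul A tA _)
    (ι : S →+* A) (hι : @Continuous S A (canonicalTopology S) tA ι)
    (P P' : {Q : RingCon A // InCont tA Q}) :
    P' ∈ @closure {Q : RingCon A // InCont tA Q}
        (TopologicalSpace.generateFrom
          {U : Set {Q : RingCon A // InCont tA Q} |
            ∃ f g : A, U = {Q : {Q : RingCon A // InCont tA Q} | Q.1 (f + g) g ∧ ¬ Q.1 g 0}})
        {P} ↔
      ∀ f g : A, P'.1 f g → P.1 f g := by
  -- Extract witnesses for `P` and `P'`.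
  obtain ⟨W⟩ := P.2
  obtain ⟨W'⟩ := P'.2
  letI : IdemTOSemifield W.K := W.instK
  letI : IdemTOSemifield W'.K := W'.instK
  letI : TopologicalSpace A := tA
  letI : TopologicalSpace S := canonicalTopology S
  letI : TopologicalSpace W.K := canonicalTopology W.K
  letI : TopologicalSpace W'.K := canonicalTopology W'.K
  letI : TopologicalSpace {Q : RingCon A // InCont tA Q} :=
    TopologicalSpace.generateFrom
      {U : Set {Q : RingCon A // InCont tA Q} |
        ∃ f g : A, U = {Q : {Q : RingCon A // InCont tA Q} | Q.1 (f + g) g ∧ ¬ Q.1 g 0}}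
  -- images of nonzero scalars are nonzero
  have himg : ∀ ε : S, ε ≠ 0 → W.v (ι ε) ≠ 0 := by
    intro ε hε h
    obtain ⟨ε', hε'⟩ := IdemTOSemifield.exists_inv ε hε
    have h1 : W.v (ι ε) * W.v (ι ε') = 1 := by
      rw [← map_mul, ← map_mul, hε', map_one, map_one]
    rw [h, zero_mul] at h1
    exact myK_zero_ne_one h1
  have himg' : ∀ ε : S, ε ≠ 0 → W'.v (ι ε) ≠ 0 := by
    intro ε hε h
    obtain ⟨ε', hε'⟩ := IdemTOSemifield.exists_inv ε hε
    have h1 : W'.v (ι ε) * W'.v (ι ε') = 1 := by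
      rw [← map_mul, ← map_mul, hε', map_one, map_one]
    rw [h, zero_mul] at h1
    exact myK_zero_ne_one h1
  -- continuity: arbitrarily small scalars
  have hsmall : ∀ δ : W.K, δ ≠ 0 → ∃ ε : S, ε ≠ 0 ∧ W.v (ι ε) ≤ δ := by
    intro δ hδ
    have hopen : IsOpen (W.v ⁻¹' Set.Iic δ) :=
      W.cont.isOpen_preimage _
        (TopologicalSpace.GenerateOpen.basic _ (Or.inr ⟨δ, hδ, rfl⟩))
    have hopen2 := hι.isOpen_preimage _ hopen
    have h0 : (0 : S) ∈ ι ⁻¹' (W.v ⁻¹' Set.Iic δ) := by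
      show W.v (ι 0) ≤ δ
      rw [map_zero, map_zero]; exact myK_zero_le δ
    obtain ⟨ε, hε, hsub⟩ := myK_open_zero_mem hopen2 h0
    exact ⟨ε, hε, hsub (Set.mem_Iic.mpr le_rfl)⟩
  -- the key "zero detection" lemma for P
  have hzero : ∀ a : A, (∀ ε : S, ε ≠ 0 → P.1 (a + ι ε) (ι ε)) → W.v a = 0 := by
    intro a h
    by_contra h0
    obtain ⟨u, hu0, hu1⟩ := myK_exists_lt_one (K := W.K)
    obtain ⟨ε, hε, hle⟩ := hsmall _ (myK_mul_ne_zero h0 hu0)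
    have h2 : W.v (a + ι ε) = W.v (ι ε) := (W.ker _ _).mp (h ε hε)
    rw [map_add, IdemTOSemifield.add_eq_max] at h2
    have h3 : W.v a ≤ W.v a * u := (max_eq_right_iff.mp h2).trans hle
    exact absurd h3 (not_le.mpr (myK_mul_lt h0 hu1))
  -- if `|g|_{P'} ≠ 0` then `|ι ε| ≤ |g|` at `P'` for some nonzero ε
  have hsmall' : ∀ δ : W'.K, δ ≠ 0 → ∃ ε : S, ε ≠ 0 ∧ W'.v (ι ε) ≤ δ := by
    intro δ hδ
    have hopen : IsOpen (W'.v ⁻¹' Set.Iic δ) :=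
      W'.cont.isOpen_preimage _
        (TopologicalSpace.GenerateOpen.basic _ (Or.inr ⟨δ, hδ, rfl⟩))
    have hopen2 := hι.isOpen_preimage _ hopen
    have h0 : (0 : S) ∈ ι ⁻¹' (W'.v ⁻¹' Set.Iic δ) := by
      show W'.v (ι 0) ≤ δ
      rw [map_zero, map_zero]; exact myK_zero_le δ
    obtain ⟨ε, hε, hsub⟩ := myK_open_zero_mem hopen2 h0
    exact ⟨ε, hε, hsub (Set.mem_Iic.mpr le_rfl)⟩
  have hzero' : ∀ a : A, (∀ ε : S, ε ≠ 0 → P'.1 (a + ι ε) (ι ε)) → W'.v a = 0 := by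
    intro a h
    by_contra h0
    obtain ⟨u, hu0, hu1⟩ := myK_exists_lt_one (K := W'.K)
    obtain ⟨ε, hε, hle⟩ := hsmall' _ (myK_mul_ne_zero h0 hu0)
    have h2 : W'.v (a + ι ε) = W'.v (ι ε) := (W'.ker _ _).mp (h ε hε)
    rw [map_add, IdemTOSemifield.add_eq_max] at h2
    have h3 : W'.v a ≤ W'.v a * u := (max_eq_right_iff.mp h2).trans hle
    exact absurd h3 (not_le.mpr (myK_mul_lt h0 hu1))
  have hne' : ∀ g : A, W'.v g ≠ 0 → ∃ ε : S, ε ≠ 0 ∧ P'.1 (g + ι ε) g := by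
    intro g hg
    by_contra hc
    push_neg at hc
    apply hg
    apply hzero' g
    intro ε hε
    rcases le_total (W'.v g) (W'.v (ι ε)) with hle | hle
    · exact (W'.ker _ _).mpr
        (by rw [map_add, IdemTOSemifield.add_eq_max, max_eq_right hle])
    · exact absurd ((W'.ker _ _).mpr
        (by rw [map_add, IdemTOSemifield.add_eq_max, max_eq_left hle])) (hc ε hε)
  rw [mem_closure_iff]
  constructor
  · -- specialization implies inclusion
    intro h f g hfg
    have key : ∀ f g : A, P'.1 (f + g) g ∧ ¬ P'.1 g 0 → P.1 (f + g) g ∧ ¬ P.1 g 0 := by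
      intro f g hU
      have ho : IsOpen {Q : {Q : RingCon A // InCont tA Q} | Q.1 (f + g) g ∧ ¬ Q.1 g 0} :=
        TopologicalSpace.GenerateOpen.basic _ ⟨f, g, rfl⟩
      obtain ⟨x, hx, hxP⟩ := h _ ho hU
      rw [Set.mem_singleton_iff] at hxP
      rwa [hxP] at hx
    have hv : W'.v f = W'.v g := (W'.ker f g).mp hfg
    by_cases hg : W'.v g = 0
    · -- both sides vanish at P', hence also at P
      have hvf : W.v f = 0 := by
        apply hzero f
        intro ε hε
        refine (key f (ι ε) ⟨?_, ?_⟩).1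
        · exact (W'.ker _ _).mpr (by
            rw [map_add, IdemTOSemifield.add_eq_max, hv, hg,
              max_eq_right (myK_zero_le _)])
        · exact fun hc => himg' ε hε (by
            have := (W'.ker _ _).mp hc; rwa [map_zero] at this)
      have hvg : W.v g = 0 := by
        apply hzero g
        intro ε hε
        refine (key g (ι ε) ⟨?_, ?_⟩).1
        · exact (W'.ker _ _).mpr (by
            rw [map_add, IdemTOSemifield.add_eq_max, hg,
              max_eq_right (myK_zero_le _)])
        · exact fun hc => himg' ε hε (by
            have := (W'.ker _ _).mp hc; rwa [map_zero] at this)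
      exact (W.ker f g).mpr (hvf.trans hvg.symm)
    · have hP'g0 : ¬ P'.1 g 0 := fun hc => hg (by
        have := (W'.ker _ _).mp hc; rwa [map_zero] at this)
      have hP'f0 : ¬ P'.1 f 0 := fun hc => hg (by
        have := (W'.ker _ _).mp hc; rw [map_zero] at this; exact hv.symm.trans this)
      have h1 := (key f g ⟨(W'.ker _ _).mpr (by
        rw [map_add, IdemTOSemifield.add_eq_max, hv, max_self]), hP'g0⟩).1
      have h2 := (key g f ⟨(W'.ker _ _).mpr (by
        rw [map_add, IdemTOSemifield.add_eq_max, hv, max_self]), hP'f0⟩).1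
      have hv1 : W.v f ≤ W.v g := by
        have := (W.ker _ _).mp h1
        rw [map_add, IdemTOSemifield.add_eq_max] at this
        exact max_eq_right_iff.mp this
      have hv2 : W.v g ≤ W.v f := by
        have := (W.ker _ _).mp h2
        rw [map_add, IdemTOSemifield.add_eq_max] at this
        exact max_eq_right_iff.mp this
      exact (W.ker f g).mpr (le_antisymm hv1 hv2)
  · -- inclusion implies specialization
    intro hsub o ho
    induction ho with
    | basic s hs =>
      intro hmem
      obtain ⟨f, g, rfl⟩ := hs
      refine ⟨P, ⟨hsub _ _ hmem.1, ?_⟩, rfl⟩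
      intro hPg0
      have hvg : W.v g = 0 := by
        have := (W.ker _ _).mp hPg0; rwa [map_zero] at this
      have hv'g : W'.v g ≠ 0 := fun hc => hmem.2 ((W'.ker g 0).mpr (by
        rw [map_zero]; exact hc))
      obtain ⟨ε, hε, hP'⟩ := hne' g hv'g
      have h2 : W.v (g + ι ε) = W.v g := (W.ker _ _).mp (hsub _ _ hP')
      rw [map_add, IdemTOSemifield.add_eq_max, hvg,
        max_eq_right (myK_zero_le _)] at h2
      exact himg ε hε h2
    | univ => exact fun _ => ⟨P, trivial, rfl⟩
    | inter s t _ _ ihs iht =>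
      intro hmem
      obtain ⟨x, hx, hxP⟩ := ihs hmem.1
      obtain ⟨y, hy, hyP⟩ := iht hmem.2
      rw [Set.mem_singleton_iff] at hxP hyP
      exact ⟨P, ⟨hxP ▸ hx, hyP ▸ hy⟩, rfl⟩
    | sUnion 𝒮 _ ih =>
      intro hmem
      obtain ⟨t, ht, hmt⟩ := hmem
      obtain ⟨x, hx, hxP⟩ := ih t ht hmt
      exact ⟨x, ⟨t, ht, hx⟩, hxP⟩
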